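/- arXiv:1511.07331 — 3 statements merged into one kernel-verified Lean document; each statement's English description precedes it below -/
import Mathlib

section
/- Let S be a scheme and let f : Y → X and g : X → Z be morphisms of S-schemes. If f and g are both bumpy, then the composite g ∘ f : Y → Z is bumpy. -/
open AlgebraicGeometry CategoryTheory CategoryTheory.Limits

universe u

/-- A morphism of schemes is flat if all its stalk maps are flat ring maps. -/
def Scheme.Hom.IsFlat {X Y : Scheme.{u}} (f : Y.Hom X) : Prop :=
  ∀ y : Y, letI : Algebra (X.presheaf.stalk (f.base y)) (Y.presheaf.stalk y) :=
    (f.stalkMap y).hom.toAlgebra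
  Module.Flat (X.presheaf.stalk (f.base y)) (Y.presheaf.stalk y)

/-- A morphism of schemes is fpqc if it is faithfully flat and every quasi-compact open
subset of the target is the image of a quasi-compact open subset of the source. -/
def Scheme.Hom.IsFpqc {X Y : Scheme.{u}} (f : Y ⟶ X) : Prop :=
  Scheme.Hom.IsFlat f ∧ Function.Surjective f.base ∧
    ∀ V : Set X, IsOpen V → IsCompact V →
      ∃ U : Set Y, IsOpen U ∧ IsCompact U ∧ f.base '' U = V

variable {S : Scheme.{u}}

/-- The fiber of an `S`-scheme `gX : X ⟶ S` over a point `s : S`. -/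
noncomputable def Scheme.fiberAt {X : Scheme.{u}} (gX : X ⟶ S) (s : S) : Scheme.{u} :=
  pullback gX (S.fromSpecResidueField s)

/-- The morphism induced on fibers over `s : S` by a morphism of `S`-schemes. -/
noncomputable def Scheme.fiberMap {X Y : Scheme.{u}} (gY : Y ⟶ S) (gX : X ⟶ S)
    (f : Y ⟶ X) (w : f ≫ gX = gY) (s : S) :
    Scheme.fiberAt gY s ⟶ Scheme.fiberAt gX s :=
  pullback.map gY (S.fromSpecResidueField s) gX (S.fromSpecResidueField s)
    f (𝟙 _) (𝟙 _) (by simp [w]) (by simp)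

/-- A morphism of `S`-schemes is bumpy if the induced morphism on fibers over every
point `s : S` with nonempty target fiber is fpqc. -/
def Scheme.IsBumpy {X Y : Scheme.{u}} (gY : Y ⟶ S) (gX : X ⟶ S)
    (f : Y ⟶ X) (w : f ≫ gX = gY) : Prop :=
  ∀ s : S, Nonempty (Scheme.fiberAt gX s) → Scheme.Hom.IsFpqc (Scheme.fiberMap gY gX f w s)

lemma Scheme.Hom.IsFlat.comp {X Y Z : Scheme.{u}} {f : Y ⟶ X} {g : X ⟶ Z}
    (hf : Scheme.Hom.IsFlat f) (hg : Scheme.Hom.IsFlat g) :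
    Scheme.Hom.IsFlat (f ≫ g) := fun y => by
  change RingHom.Flat ((f ≫ g).stalkMap y).hom
  rw [Scheme.Hom.stalkMap_comp]
  exact RingHom.Flat.comp (hg (f.base y)) (hf y)

lemma Scheme.Hom.IsFpqc.comp {X Y Z : Scheme.{u}} {f : Y ⟶ X} {g : X ⟶ Z}
    (hf : Scheme.Hom.IsFpqc f) (hg : Scheme.Hom.IsFpqc g) :
    Scheme.Hom.IsFpqc (f ≫ g) := by
  obtain ⟨hf_flat, hf_surj, hf_qc⟩ := hf
  obtain ⟨hg_flat, hg_surj, hg_qc⟩ := hg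
  refine ⟨hf_flat.comp hg_flat, ?_, fun V hV hVc => ?_⟩
  · rw [Scheme.Hom.comp_base, TopCat.coe_comp]
    exact hg_surj.comp hf_surj
  · obtain ⟨U, hU, hUc, rfl⟩ := hg_qc V hV hVc
    obtain ⟨W, hW, hWc, rfl⟩ := hf_qc U hU hUc
    exact ⟨W, hW, hWc, by rw [Scheme.Hom.comp_base, TopCat.coe_comp, Set.image_comp]⟩

lemma Scheme.fiberMap_comp {X Y Z : Scheme.{u}} (gY : Y ⟶ S) (gX : X ⟶ S) (gZ : Z ⟶ S)
    (f : Y ⟶ X) (g : X ⟶ Z) (wf : f ≫ gX = gY) (wg : g ≫ gZ = gX) (s : S) :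
    Scheme.fiberMap gY gZ (f ≫ g) (by rw [Category.assoc, wg, wf]) s =
      Scheme.fiberMap gY gX f wf s ≫ Scheme.fiberMap gX gZ g wg s := by
  simp only [Scheme.fiberMap, Scheme.fiberAt, pullback.map_comp, Category.comp_id]

/-- The composite of bumpy morphisms of `S`-schemes is bumpy. -/
theorem Scheme.IsBumpy.comp {S X Y Z : Scheme.{u}} (gY : Y ⟶ S) (gX : X ⟶ S) (gZ : Z ⟶ S)
    (f : Y ⟶ X) (g : X ⟶ Z) (wf : f ≫ gX = gY) (wg : g ≫ gZ = gX)
    (hf : Scheme.IsBumpy gY gX f wf) (hg : Scheme.IsBumpy gX gZ g wg) :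
    Scheme.IsBumpy gY gZ (f ≫ g) (by rw [Category.assoc, wg, wf]) := by
  intro s hZs
  have hgs := hg s hZs
  have hXs : Nonempty (Scheme.fiberAt gX s) := hgs.2.1.nonempty
  rw [Scheme.fiberMap_comp gY gX gZ f g wf wg s]
  exact (hf s hXs).comp hgs
end

section
/- Let R be a discrete valuation ring of equal characteristic p > 0 (p prime) with uniformizer π, fraction field K, and residue field k. Consider the R-algebra homomorphism u : R[x]/(x^p, π²x) → R[t]/(t^p, πt) determined by x ↦ t. Then: (1) u is not injective (for instance the nonzero class of πx is sent to πt = 0); (2) the induced K-algebra homomorphism u ⊗_R K : (R[x]/(x^p, π²x)) ⊗_R K → (R[t]/(t^p, πt)) ⊗_R K is an isomorphism; (3) the induced k-algebra homomorphism u ⊗_R k : (R[x]/(x^p, π²x)) ⊗_R k → (R[t]/(t^p, πt)) ⊗_R k is an isomorphism. -/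
/-!
Since `π²x = 0` in the source, `u` is the quotient map by the ideal generated by the class of
`πx`, which is killed by `π` and divisible by `π`. By right exactness of `⊗`, the kernel of a
surjection `u ⊗ F` is generated by `1 ⊗ ker u`. For `F = K` these elements vanish because `π`
kills them and is invertible in `K`; for `F = k` because they are divisible by `π` and `π`
kills `k`. That `πx ≠ 0` in the source is read off the coefficient of `x`, using `p ≥ 2`.
-/

open Polynomial TensorProduct

namespace Algebra.TensorProduct

variable {R A B C : Type*} [CommRing R] [CommRing A] [Ring B] [Ring C]
  [Algebra R A] [Algebra R B] [Algebra R C]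

theorem map_id_bijective_of_surjective {g : B →ₐ[R] C} (hg : Function.Surjective g)
    (hker : ∀ b, g b = 0 → (1 : A) ⊗ₜ[R] b = 0) :
    Function.Bijective (map (AlgHom.id A A) g) := by
  refine ⟨?_, LinearMap.lTensor_surjective A (g := g.toLinearMap) hg⟩
  change Function.Injective (map (AlgHom.id R A) g)
  rw [injective_iff_map_eq_zero, ← RingHom.ker_eq_bot_iff_eq_zero, lTensor_ker g hg,
    Ideal.map_eq_bot_iff_le_ker]
  exact hker

end Algebra.TensorProduct

namespace TensorProduct

variable {R M : Type*} [CommRing R] [AddCommGroup M] [Module R M] {r : R} {m : M}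

theorem one_tmul_eq_zero_of_smul_eq_zero {F : Type*} [Ring F] [Algebra R F]
    (hr : IsUnit (algebraMap R F r)) (hm : r • m = 0) : (1 : F) ⊗ₜ[R] m = 0 := by
  obtain ⟨s, hs⟩ := hr.exists_right_inv
  rw [← hs, ← smul_eq_mul, algebraMap_smul, smul_tmul, hm, tmul_zero]

theorem tmul_smul_eq_zero {N : Type*} [AddCommGroup N] [Module R N] {n : N} (hn : r • n = 0) :
    n ⊗ₜ[R] (r • m) = 0 := by
  rw [← smul_tmul, hn, zero_tmul]

end TensorProduct

namespace Polynomial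

variable {R : Type*} [CommRing R] {p : ℕ}

lemma smul_mk_eq_mk_C_mul (I : Ideal R[X]) (a : R) (f : R[X]) :
    a • Ideal.Quotient.mk I f = Ideal.Quotient.mk I (C a * f) := by
  rw [← smul_eq_C_mul]
  rfl

lemma span_X_pow_C_mul_X_le {a b : R} (hab : a ∣ b) :
    Ideal.span ({X ^ p, C b * X} : Set R[X]) ≤ Ideal.span {X ^ p, C a * X} := by
  obtain ⟨c, rfl⟩ := hab
  rw [Ideal.span_le, Set.insert_subset_iff, Set.singleton_subset_iff, map_mul, mul_comm (C a) (C c),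
    mul_assoc]
  exact ⟨Ideal.subset_span (Set.mem_insert _ _),
    Ideal.mul_mem_left _ (C c) (Ideal.subset_span (Set.mem_insert_of_mem _ rfl))⟩

lemma smul_mk_X_eq_zero (a : R) :
    a • Ideal.Quotient.mk (Ideal.span ({X ^ p, C a * X} : Set R[X])) X = 0 := by
  rw [smul_mk_eq_mk_C_mul, Ideal.Quotient.eq_zero_iff_mem]
  exact Ideal.subset_span (by simp)

lemma smul_mk_X_ne_zero (hp : 2 ≤ p) {a b : R} (hab : ¬ b ∣ a) :
    a • Ideal.Quotient.mk (Ideal.span ({X ^ p, C b * X} : Set R[X])) X ≠ 0 := by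
  rw [smul_mk_eq_mk_C_mul, Ne, Ideal.Quotient.eq_zero_iff_mem, Ideal.mem_span_pair]
  rintro ⟨f, g, hfg⟩
  have h1 := congrArg (coeff · 1) hfg
  simp only [mul_left_comm g, coeff_add, coeff_mul_X_pow', if_neg (by omega : ¬p ≤ 1),
    coeff_C_mul, zero_add, coeff_mul_X g 0, coeff_X_one, mul_one] at h1
  exact hab ⟨g.coeff 0, h1.symm⟩

lemma exists_eq_smul_of_factor_eq_zero (a : R)
    {x : R[X] ⧸ Ideal.span ({X ^ p, C (a ^ 2) * X} : Set R[X])}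
    (hx : Ideal.Quotient.factor (span_X_pow_C_mul_X_le (dvd_pow_self a two_ne_zero)) x = 0) :
    ∃ f : R[X], x = a • Ideal.Quotient.mk _ (f * X) := by
  obtain ⟨x, rfl⟩ := Ideal.Quotient.mk_surjective x
  rw [Ideal.Quotient.factor_mk, Ideal.Quotient.eq_zero_iff_mem, Ideal.mem_span_pair] at hx
  obtain ⟨f, g, rfl⟩ := hx
  refine ⟨g, ?_⟩
  rw [smul_mk_eq_mk_C_mul, Ideal.Quotient.eq,
    show f * X ^ p + g * (C a * X) - C a * (g * X) = f * X ^ p by ring]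
  exact Ideal.mul_mem_left _ f (Ideal.subset_span (Set.mem_insert _ _))

lemma smul_smul_mk_mul_X_eq_zero (a : R) (f : R[X]) :
    a • a • Ideal.Quotient.mk (Ideal.span ({X ^ p, C (a ^ 2) * X} : Set R[X])) (f * X) = 0 := by
  rw [smul_smul, ← pow_two, smul_mk_eq_mk_C_mul, Ideal.Quotient.eq_zero_iff_mem, mul_left_comm]
  exact Ideal.mul_mem_left _ _ (Ideal.subset_span (by simp))

end Polynomial

theorem exists_algHom_not_injective_fiberwise_iso_general
    (R : Type) [CommRing R] [IsDomain R] [IsDiscreteValuationRing R]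
    (p : ℕ) (hp : p.Prime) (π : R) (hπ : Irreducible π) :
    ∃ u : (R[X] ⧸ Ideal.span ({X ^ p, C (π ^ 2) * X} : Set R[X])) →ₐ[R]
        (R[X] ⧸ Ideal.span ({X ^ p, C π * X} : Set R[X])),
      u (Ideal.Quotient.mk _ X) = Ideal.Quotient.mk _ X ∧
      π • (Ideal.Quotient.mk (Ideal.span ({X ^ p, C (π ^ 2) * X} : Set R[X])) X) ≠ 0 ∧
      π • (Ideal.Quotient.mk (Ideal.span ({X ^ p, C π * X} : Set R[X])) X) = 0 ∧
      ¬ Function.Injective u ∧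
      Function.Bijective
        (Algebra.TensorProduct.map (AlgHom.id (FractionRing R) (FractionRing R)) u) ∧
      Function.Bijective
        (Algebra.TensorProduct.map
          (AlgHom.id (R ⧸ IsLocalRing.maximalIdeal R) (R ⧸ IsLocalRing.maximalIdeal R)) u) := by
  have hIJ := span_X_pow_C_mul_X_le (p := p) (dvd_pow_self π two_ne_zero)
  have hsurj : Function.Surjective (Ideal.Quotient.factorₐ R hIJ) :=
    Ideal.Quotient.factor_surjective hIJ
  have hsq : ¬ π ^ 2 ∣ π := by
    simpa using (pow_dvd_pow_iff (n := 2) (m := 1) hπ.ne_zero hπ.not_isUnit).not.mpr (by omega)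
  have hne : π • Ideal.Quotient.mk (Ideal.span ({X ^ p, C (π ^ 2) * X} : Set R[X])) X ≠ 0 :=
    smul_mk_X_ne_zero hp.two_le hsq
  refine ⟨Ideal.Quotient.factorₐ R hIJ, rfl, hne, smul_mk_X_eq_zero π,
    fun hinj ↦ hne (hinj ?_), ?_, ?_⟩
  · rw [map_smul, map_zero]
    exact smul_mk_X_eq_zero π
  · refine Algebra.TensorProduct.map_id_bijective_of_surjective hsurj fun x hx ↦ ?_
    obtain ⟨f, rfl⟩ := exists_eq_smul_of_factor_eq_zero π hx
    have hπK : IsUnit (algebraMap R (FractionRing R) π) :=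
      .mk0 _ ((map_ne_zero_iff _ (IsFractionRing.injective R _)).2 hπ.ne_zero)
    exact one_tmul_eq_zero_of_smul_eq_zero hπK (smul_smul_mk_mul_X_eq_zero π f)
  · refine Algebra.TensorProduct.map_id_bijective_of_surjective hsurj fun x hx ↦ ?_
    obtain ⟨f, rfl⟩ := exists_eq_smul_of_factor_eq_zero π hx
    refine tmul_smul_eq_zero ?_
    rw [Algebra.smul_def, mul_one, Ideal.Quotient.algebraMap_eq, Ideal.Quotient.eq_zero_iff_mem]
    exact (IsLocalRing.mem_maximalIdeal π).2 hπ.not_isUnit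

/-- Over a discrete valuation ring `R` of equal characteristic `p > 0` with uniformizer `π`,
the `R`-algebra homomorphism `u : R[x]/(x^p, π²x) → R[t]/(t^p, πt)`, `x ↦ t`, is not
injective (the nonzero class of `πx` is sent to `πt = 0`), while the induced maps on
generic fibers (base change to `K = Frac R`) and on special fibers (base change to
`k = R/(π)`) are both isomorphisms. -/
theorem exists_algHom_not_injective_fiberwise_iso
    (R : Type) [CommRing R] [IsDomain R] [IsDiscreteValuationRing R]
    (p : ℕ) (hp : p.Prime) [CharP R p] (π : R) (hπ : Irreducible π) :
    ∃ u : (R[X] ⧸ Ideal.span ({X ^ p, C (π ^ 2) * X} : Set R[X])) →ₐ[R]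
        (R[X] ⧸ Ideal.span ({X ^ p, C π * X} : Set R[X])),
      u (Ideal.Quotient.mk _ X) = Ideal.Quotient.mk _ X ∧
      π • (Ideal.Quotient.mk (Ideal.span ({X ^ p, C (π ^ 2) * X} : Set R[X])) X) ≠ 0 ∧
      π • (Ideal.Quotient.mk (Ideal.span ({X ^ p, C π * X} : Set R[X])) X) = 0 ∧
      ¬ Function.Injective u ∧
      Function.Bijective
        (Algebra.TensorProduct.map (AlgHom.id (FractionRing R) (FractionRing R)) u) ∧
      Function.Bijective
        (Algebra.TensorProduct.map
          (AlgHom.id (R ⧸ IsLocalRing.maximalIdeal R) (R ⧸ IsLocalRing.maximalIdeal R)) u) :=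
  exists_algHom_not_injective_fiberwise_iso_general R p hp π hπ
end

section
/- Let R be a discrete valuation ring with uniformizer π whose residue field has characteristic p > 0 (p prime), and let A be either R[x]/(x^p − x, πx) or R[x]/(x^p, πx). Then A carries a Hopf algebra structure over R whose comultiplication Δ : A → A ⊗_R A, counit ε : A → R, and antipode S : A → A are the R-algebra homomorphisms determined by Δ(x) = x ⊗ 1 + 1 ⊗ x, ε(x) = 0, S(x) = −x. In particular these assignments are well defined: in A ⊗_R A one has π·(x ⊗ 1 + 1 ⊗ x) = 0 and (x ⊗ 1 + 1 ⊗ x)^p − (x ⊗ 1 + 1 ⊗ x) = 0 (respectively (x ⊗ 1 + 1 ⊗ x)^p = 0), because π x = 0 in A and p lies in the maximal ideal (π) of R. -/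
open Polynomial TensorProduct

/-- The ring `R[x]/(f, πx)`. For `f = x^p − x` (resp. `f = x^p`) this is the coordinate
ring of the quasi-finite non-flat group scheme `G` (resp. `H`) of Example 3.7. -/
abbrev bumpyRing (R : Type) [CommRing R] (π : R) (f : R[X]) : Type :=
  R[X] ⧸ Ideal.span ({f, C π * X} : Set R[X])

/-- The class of `x` in `R[x]/(f, πx)`. -/
noncomputable abbrev bumpyGen (R : Type) [CommRing R] (π : R) (f : R[X]) :
    bumpyRing R π f :=
  Ideal.Quotient.mk (Ideal.span ({f, C π * X} : Set R[X])) X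

/-! Since `π x = 0` and `π ∣ p`, the elements `x ⊗ 1` and `1 ⊗ x` of `A ⊗ A` are killed by `p`,
so the freshman's dream holds for them and the additive polynomial `f` gives
`f(x ⊗ 1 + 1 ⊗ x) = f(x) ⊗ 1 + 1 ⊗ f(x) = 0`; likewise `f(-x) = -f(x) = 0`. Hence `Δ`, `ε`
and `S` descend to `A`, and as `A` is generated by the primitive element `x`, each Hopf axiom
only has to be checked on `x`. -/

theorem IsLocalRing.natCast_mem_maximalIdeal {R : Type} [CommRing R] [IsLocalRing R]
    (p : ℕ) [CharP (R ⧸ IsLocalRing.maximalIdeal R) p] :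
    (p : R) ∈ IsLocalRing.maximalIdeal R := by
  rw [← Ideal.Quotient.eq_zero_iff_mem, map_natCast]
  exact CharP.cast_eq_zero _ p

theorem Irreducible.dvd_natCast_of_charP_residueField {R : Type} [CommRing R] [IsDomain R]
    [IsDiscreteValuationRing R] {π : R} (hπ : Irreducible π)
    (p : ℕ) [CharP (R ⧸ IsLocalRing.maximalIdeal R) p] : π ∣ (p : R) := by
  rw [← Ideal.mem_span_singleton, ← hπ.maximalIdeal_eq]
  exact IsLocalRing.natCast_mem_maximalIdeal p

section AdditivePolynomial

variable {R S : Type} [CommRing R] [CommRing S] [Algebra R S] {p : ℕ} {f : R[X]}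

theorem add_pow_prime_of_nsmul_eq_zero (hp : p.Prime) {a : S} (b : S) (ha : p • a = 0) :
    (a + b) ^ p = a ^ p + b ^ p := by
  rw [add_pow_prime_eq hp, ← nsmul_eq_mul, ha, zero_mul, zero_mul, add_zero]

variable (hp : p.Prime) (hf : f = X ^ p - X ∨ f = X ^ p)
include hp hf

theorem aeval_add_of_nsmul_eq_zero {a : S} (b : S) (ha : p • a = 0) :
    aeval (a + b) f = aeval a f + aeval b f := by
  rcases hf with rfl | rfl
  · simp only [map_sub, map_pow, aeval_X, add_pow_prime_of_nsmul_eq_zero hp b ha]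
    ring
  · simp only [map_pow, aeval_X, add_pow_prime_of_nsmul_eq_zero hp b ha]

theorem aeval_zero_of_eq_X_pow_sub_X_or_eq_X_pow : aeval (0 : S) f = 0 := by
  have h := aeval_add_of_nsmul_eq_zero hp hf (0 : S) (smul_zero p)
  rwa [add_zero, left_eq_add] at h

theorem aeval_neg_of_nsmul_eq_zero {a : S} (ha : p • a = 0) : aeval (-a) f = -aeval a f := by
  have h := aeval_add_of_nsmul_eq_zero hp hf (-a) ha
  rw [add_neg_cancel, aeval_zero_of_eq_X_pow_sub_X_or_eq_X_pow hp hf] at h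
  exact eq_neg_of_add_eq_zero_right h.symm

end AdditivePolynomial

section PrimitiveGenerator

variable {R A : Type} [CommRing R] [CommRing A] [Algebra R A] {x : A}
  (hx : Algebra.adjoin R {x} = ⊤) {Δ : A →ₐ[R] A ⊗[R] A} (hΔ : Δ x = x ⊗ₜ 1 + 1 ⊗ₜ x)
include hx hΔ

theorem coassoc_of_primitive :
    (Algebra.TensorProduct.assoc R R R A A A).toAlgHom.comp
        ((Algebra.TensorProduct.map Δ (AlgHom.id R A)).comp Δ) =
      (Algebra.TensorProduct.map (AlgHom.id R A) Δ).comp Δ := by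
  refine AlgHom.ext_of_adjoin_eq_top hx (Set.eqOn_singleton.mpr ?_)
  simp [hΔ, tmul_add, add_tmul, Algebra.TensorProduct.one_def]
  abel

variable {ε : A →ₐ[R] R} (hε : ε x = 0)
include hε

theorem lid_comp_map_counit_of_primitive :
    (Algebra.TensorProduct.lid R A).toAlgHom.comp
        ((Algebra.TensorProduct.map ε (AlgHom.id R A)).comp Δ) = AlgHom.id R A :=
  AlgHom.ext_of_adjoin_eq_top hx (Set.eqOn_singleton.mpr (by simp [hΔ, hε]))

theorem rid_comp_map_counit_of_primitive :
    (Algebra.TensorProduct.rid R R A).toAlgHom.comp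
        ((Algebra.TensorProduct.map (AlgHom.id R A) ε).comp Δ) = AlgHom.id R A :=
  AlgHom.ext_of_adjoin_eq_top hx (Set.eqOn_singleton.mpr (by simp [hΔ, hε]))

variable {S : A →ₐ[R] A} (hS : S x = -x)
include hS

theorem lmul'_comp_map_antipode_left_of_primitive :
    (Algebra.TensorProduct.lmul' R (S := A)).comp
        ((Algebra.TensorProduct.map S (AlgHom.id R A)).comp Δ) = (Algebra.ofId R A).comp ε :=
  AlgHom.ext_of_adjoin_eq_top hx (Set.eqOn_singleton.mpr (by simp [hΔ, hε, hS]))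

theorem lmul'_comp_map_antipode_right_of_primitive :
    (Algebra.TensorProduct.lmul' R (S := A)).comp
        ((Algebra.TensorProduct.map (AlgHom.id R A) S).comp Δ) = (Algebra.ofId R A).comp ε :=
  AlgHom.ext_of_adjoin_eq_top hx (Set.eqOn_singleton.mpr (by simp [hΔ, hε, hS]))

end PrimitiveGenerator

section BumpyRing

variable {R : Type} [CommRing R] {π : R} {f : R[X]}

theorem bumpyGen_eq_mkₐ_X : bumpyGen R π f = Ideal.Quotient.mkₐ R _ X := rfl

theorem smul_bumpyGen : π • bumpyGen R π f = 0 := by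
  rw [bumpyGen_eq_mkₐ_X, ← map_smul, Ideal.Quotient.mkₐ_eq_mk, Ideal.Quotient.eq_zero_iff_mem,
    smul_eq_C_mul]
  exact Ideal.subset_span (by simp)

theorem nsmul_bumpyGen_of_dvd {n : ℕ} (h : π ∣ (n : R)) : n • bumpyGen R π f = 0 := by
  obtain ⟨c, hc⟩ := h
  rw [← Nat.cast_smul_eq_nsmul R, hc, mul_smul, smul_comm, smul_bumpyGen, smul_zero]

theorem aeval_bumpyGen : aeval (bumpyGen R π f) f = 0 := by
  rw [bumpyGen_eq_mkₐ_X, aeval_algHom_apply, aeval_X_left_apply, Ideal.Quotient.mkₐ_eq_mk,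
    Ideal.Quotient.eq_zero_iff_mem]
  exact Ideal.subset_span (by simp)

theorem adjoin_bumpyGen : Algebra.adjoin R {bumpyGen R π f} = ⊤ := by
  rw [bumpyGen_eq_mkₐ_X, ← Set.image_singleton (f := Ideal.Quotient.mkₐ R _),
    Algebra.adjoin_image, Polynomial.adjoin_X, Algebra.map_top, AlgHom.range_eq_top]
  exact Ideal.Quotient.mkₐ_surjective R _

theorem smul_bumpyGen_tmul_one_add_one_tmul :
    π • (bumpyGen R π f ⊗ₜ[R] (1 : bumpyRing R π f) + 1 ⊗ₜ bumpyGen R π f) = 0 := by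
  rw [smul_add, smul_tmul', ← tmul_smul, smul_bumpyGen, zero_tmul, tmul_zero, add_zero]

theorem smul_neg_bumpyGen : π • -bumpyGen R π f = 0 := by
  rw [smul_neg, smul_bumpyGen, neg_zero]

variable {B : Type} [Semiring B] [Algebra R B]

noncomputable def bumpyRing.lift (b : B) (hf : aeval b f = 0) (hπ : π • b = 0) :
    bumpyRing R π f →ₐ[R] B :=
  Ideal.Quotient.liftₐ _ (aeval b) fun _ hg ↦ by
    have hker : Ideal.span {f, C π * X} ≤ RingHom.ker (aeval b) := by
      rw [Ideal.span_le]
      rintro _ (rfl | rfl)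
      · exact hf
      · simp [← Algebra.smul_def, hπ]
    exact hker hg

@[simp]
theorem bumpyRing.lift_bumpyGen (b : B) (hf : aeval b f = 0) (hπ : π • b = 0) :
    bumpyRing.lift b hf hπ (bumpyGen R π f) = b :=
  aeval_X b

variable {p : ℕ} (hp : p.Prime) (hf : f = X ^ p - X ∨ f = X ^ p) (hπp : π ∣ (p : R))
include hp hf hπp

theorem aeval_bumpyGen_tmul_one_add_one_tmul :
    aeval (bumpyGen R π f ⊗ₜ[R] (1 : bumpyRing R π f) + 1 ⊗ₜ bumpyGen R π f) f = 0 := by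
  have hpx : p • (bumpyGen R π f ⊗ₜ[R] (1 : bumpyRing R π f)) = 0 := by
    rw [smul_tmul' p, nsmul_bumpyGen_of_dvd hπp, zero_tmul]
  -- `rw` cannot match here: the `Algebra R` structure on the tensor product of the quotient
  -- agrees with the one `[CommRing S] [Algebra R S]` produces only up to unfolding instances.
  refine (aeval_add_of_nsmul_eq_zero (S := bumpyRing R π f ⊗[R] bumpyRing R π f)
    hp hf _ hpx).trans ?_
  rw [← Algebra.TensorProduct.includeLeft_apply (S := R),
    ← Algebra.TensorProduct.includeRight_apply,
    aeval_algHom_apply Algebra.TensorProduct.includeLeft,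
    aeval_algHom_apply Algebra.TensorProduct.includeRight, aeval_bumpyGen, map_zero, map_zero,
    add_zero]

theorem aeval_neg_bumpyGen : aeval (-bumpyGen R π f) f = 0 := by
  rw [aeval_neg_of_nsmul_eq_zero hp hf (nsmul_bumpyGen_of_dvd hπp), aeval_bumpyGen, neg_zero]

end BumpyRing

/-- Let `R` be a discrete valuation ring with uniformizer `π` and residue characteristic
`p > 0`, and let `A = R[x]/(f, πx)` where `f = x^p − x` or `f = x^p`. Then the assignments
`Δ(x) = x ⊗ 1 + 1 ⊗ x`, `ε(x) = 0`, `S(x) = −x` are well defined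
(`π·(x ⊗ 1 + 1 ⊗ x) = 0` and `f(x ⊗ 1 + 1 ⊗ x) = 0` in `A ⊗_R A`) and determine
`R`-algebra homomorphisms giving `A` the structure of a Hopf algebra over `R`:
the comultiplication is coassociative and counital and the antipode satisfies the
antipode axioms. -/
theorem hopfAlgebra_structure
    (R : Type) [CommRing R] [IsDomain R] [IsDiscreteValuationRing R]
    (p : ℕ) (hp : p.Prime) (π : R) (hπ : Irreducible π)
    [CharP (R ⧸ IsLocalRing.maximalIdeal R) p]
    (f : R[X]) (hf : f = X ^ p - X ∨ f = X ^ p) :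
    -- well-definedness of the comultiplication on the generator
    π • (bumpyGen R π f ⊗ₜ[R] (1 : bumpyRing R π f) +
        (1 : bumpyRing R π f) ⊗ₜ[R] bumpyGen R π f) = 0 ∧
    Polynomial.aeval (bumpyGen R π f ⊗ₜ[R] (1 : bumpyRing R π f) +
        (1 : bumpyRing R π f) ⊗ₜ[R] bumpyGen R π f) f = 0 ∧
    -- the Hopf algebra structure maps
    ∃ (Δ : bumpyRing R π f →ₐ[R] bumpyRing R π f ⊗[R] bumpyRing R π f)
      (ε : bumpyRing R π f →ₐ[R] R)
      (Sa : bumpyRing R π f →ₐ[R] bumpyRing R π f),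
      -- values on the generator
      Δ (bumpyGen R π f) =
        bumpyGen R π f ⊗ₜ[R] (1 : bumpyRing R π f) +
          (1 : bumpyRing R π f) ⊗ₜ[R] bumpyGen R π f ∧
      ε (bumpyGen R π f) = 0 ∧
      Sa (bumpyGen R π f) = - bumpyGen R π f ∧
      -- coassociativity
      (Algebra.TensorProduct.assoc R R R (bumpyRing R π f) (bumpyRing R π f)
            (bumpyRing R π f)).toAlgHom.comp
          ((Algebra.TensorProduct.map Δ (AlgHom.id R (bumpyRing R π f))).comp Δ) =
        (Algebra.TensorProduct.map (AlgHom.id R (bumpyRing R π f)) Δ).comp Δ ∧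
      -- counit axioms
      (Algebra.TensorProduct.lid R (bumpyRing R π f)).toAlgHom.comp
          ((Algebra.TensorProduct.map ε (AlgHom.id R (bumpyRing R π f))).comp Δ) =
        AlgHom.id R (bumpyRing R π f) ∧
      (Algebra.TensorProduct.rid R R (bumpyRing R π f)).toAlgHom.comp
          ((Algebra.TensorProduct.map (AlgHom.id R (bumpyRing R π f)) ε).comp Δ) =
        AlgHom.id R (bumpyRing R π f) ∧
      -- antipode axioms
      (Algebra.TensorProduct.lmul' R (S := bumpyRing R π f)).comp
          ((Algebra.TensorProduct.map Sa (AlgHom.id R (bumpyRing R π f))).comp Δ) =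
        (Algebra.ofId R (bumpyRing R π f)).comp ε ∧
      (Algebra.TensorProduct.lmul' R (S := bumpyRing R π f)).comp
          ((Algebra.TensorProduct.map (AlgHom.id R (bumpyRing R π f)) Sa).comp Δ) =
        (Algebra.ofId R (bumpyRing R π f)).comp ε := by
  have hπp := hπ.dvd_natCast_of_charP_residueField p
  have hΔf := aeval_bumpyGen_tmul_one_add_one_tmul hp hf hπp
  have hεf := aeval_zero_of_eq_X_pow_sub_X_or_eq_X_pow (S := R) hp hf
  have hSf := aeval_neg_bumpyGen hp hf hπp
  have hΔ := bumpyRing.lift_bumpyGen _ hΔf smul_bumpyGen_tmul_one_add_one_tmul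
  have hε := bumpyRing.lift_bumpyGen _ hεf (smul_zero π)
  have hS := bumpyRing.lift_bumpyGen _ hSf smul_neg_bumpyGen
  exact ⟨smul_bumpyGen_tmul_one_add_one_tmul, hΔf, _, _, _, hΔ, hε, hS,
    coassoc_of_primitive adjoin_bumpyGen hΔ,
    lid_comp_map_counit_of_primitive adjoin_bumpyGen hΔ hε,
    rid_comp_map_counit_of_primitive adjoin_bumpyGen hΔ hε,
    lmul'_comp_map_antipode_left_of_primitive adjoin_bumpyGen hΔ hε hS,
    lmul'_comp_map_antipode_right_of_primitive adjoin_bumpyGen hΔ hε hS⟩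
end
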